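/- The generating function L(x) = Σ_{n≥1} r(n)·x^n of the numbers r(n) of (−1)-Dyck paths of semi-length n satisfies the algebraic equation obtained from L(x) = (−1 + 4x − 3x² + √(1 − 4x + 2x² + x⁴)) / (2(1 − 4x + 2x²)); equivalently, (2(1 − 4x + 2x²)·L(x) + 1 − 4x + 3x²)² = 1 − 4x + 2x² + x⁴ as formal power series. -/

import Mathlib

/-- Value of a step: `true` = up-step U, `false` = down-step D. -/
def stepVal (b : Bool) : ℤ := if b then 1 else -1

/-- Heights (y-coordinates) of all lattice points visited along the path,
starting at 0. -/
def heights (p : List Bool) : List ℤ := p.scanl (fun h b => h + stepVal b) 0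

/-- A Dyck path: equal numbers of up and down steps, never going below the x-axis. -/
def IsDyck (p : List Bool) : Prop :=
  p.count true = p.count false ∧ ∀ h ∈ heights p, 0 ≤ h

/-- Semi-length of a path: the number of up-steps. -/
def semilength (p : List Bool) : ℕ := p.count true

/-- Levels (y-coordinates of the local minima) of the valleys (DU factors),
read from left to right. -/
def valleyLevels (p : List Bool) : List ℤ :=
  ((p.zip p.tail).zip (heights p).tail).filterMap
    (fun x => if x.1.1 = false ∧ x.1.2 = true then some x.2 else none)

/-- A path is restricted `d`-Dyck (on the valley condition) if consecutive
valley levels `ν_i, ν_{i+1}` satisfy `ν_{i+1} - ν_i ≥ d`. -/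
def RestrictedD (d : ℤ) (p : List Bool) : Prop :=
  List.Chain' (fun a b => d ≤ b - a) (valleyLevels p)

/-- Number of peaks (UD factors) of a path. -/
def peaks (p : List Bool) : ℕ := (p.zip p.tail).countP (fun x => x.1 && !x.2)

/-- The area of a path: the sum of the y-coordinates of all lattice points on it. -/
def pathArea (p : List Bool) : ℤ := (heights p).sum

/-- `dDyckCount d n` = number of `d`-Dyck paths of semi-length `n`. -/
noncomputable def dDyckCount (d : ℤ) (n : ℕ) : ℕ :=
  {p : List Bool | IsDyck p ∧ semilength p = n ∧ RestrictedD d p}.ncard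

open PowerSeries

/-- The generating function `L(x) = Σ_{n ≥ 1} r(n) x^n` of the numbers of
`(-1)`-Dyck paths of semi-length `n`. -/
noncomputable def Lgf : PowerSeries ℚ :=
  PowerSeries.mk fun n => if n = 0 then 0 else (dDyckCount (-1) n : ℚ)

/-!
A nonempty Dyck word factors uniquely as `U q D r` (first return). Its valleys are those of `q`
raised by one, followed, if `r` is nonempty, by a valley on the axis and then the valleys of `r`.
So `U q D r` is `(-1)`-Dyck iff `q` and `r` are and, when `r` is nonempty, the last valley of `q`
is on the axis; and the last valley of `U q D r` is on the axis iff that of `r` is, or `r` is empty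
and `q` has no valley. For the generating functions `F` of `(-1)`-Dyck words, `B` of those among
them whose last valley is on the axis, and `V` of valley-free words this gives
`F = 1 + x (F + B (F - 1))`, `B = 1 + x (V + B (B - 1))` and `V = 1 + x V`. Eliminating `B` and
`V` leaves the quadratic equation for `L = F - 1`.
-/

section GradedGF

variable (R : Type*) [CommSemiring R] {α β : Type*}

noncomputable def gradedGF (w : α → ℕ) (s : Set α) : R⟦X⟧ :=
  mk fun n => ({a ∈ s | w a = n}.ncard : R)

variable {R}

lemma coeff_gradedGF (w : α → ℕ) (s : Set α) (n : ℕ) :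
    coeff n (gradedGF R w s) = ({a ∈ s | w a = n}.ncard : R) :=
  coeff_mk _ _

lemma gradedGF_insert {w : α → ℕ} (hw : ∀ n, {a | w a = n}.Finite) {s : Set α} {a : α}
    (ha : a ∉ s) : gradedGF R w (insert a s) = X ^ w a + gradedGF R w s := by
  ext n
  have hfin : {x ∈ s | w x = n}.Finite := (hw n).subset fun x hx => hx.2
  rw [map_add, coeff_gradedGF, coeff_gradedGF, coeff_X_pow]
  by_cases h : w a = n
  · have hfib : {x ∈ insert a s | w x = n} = insert a {x ∈ s | w x = n} := by
      ext x; by_cases hx : x = a <;> simp_all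
    rw [hfib, Set.ncard_insert_of_notMem (fun h' => ha h'.1) hfin, if_pos h.symm, Nat.cast_succ,
      add_comm]
  · have hfib : {x ∈ insert a s | w x = n} = {x ∈ s | w x = n} := by
      ext x; by_cases hx : x = a <;> simp_all
    rw [hfib, if_neg (Ne.symm h), zero_add]

lemma finite_setOf_add_eq {w₁ : α → ℕ} {w₂ : β → ℕ} (hw₁ : ∀ n, {a | w₁ a = n}.Finite)
    (hw₂ : ∀ n, {b | w₂ b = n}.Finite) (n : ℕ) : {x : α × β | w₁ x.1 + w₂ x.2 = n}.Finite :=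
  ((Finset.HasAntidiagonal.antidiagonal n).finite_toSet.biUnion fun ij _ =>
    (hw₁ ij.1).prod (hw₂ ij.2)).subset fun x hx =>
      Set.mem_biUnion (x := (w₁ x.1, w₂ x.2)) (by simpa using hx) ⟨rfl, rfl⟩

lemma gradedGF_singleton (w : α → ℕ) (a : α) : gradedGF R w {a} = X ^ w a := by
  ext n
  rw [coeff_gradedGF, coeff_X_pow]
  by_cases h : w a = n
  · rw [if_pos h.symm, show {x ∈ ({a} : Set α) | w x = n} = {a} by ext; simp_all,
      Set.ncard_singleton, Nat.cast_one]
  · rw [if_neg (Ne.symm h), show {x ∈ ({a} : Set α) | w x = n} = ∅ by ext; simp_all,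
      Set.ncard_empty, Nat.cast_zero]

lemma gradedGF_union {w : α → ℕ} (hw : ∀ n, {a | w a = n}.Finite) {s t : Set α}
    (hst : Disjoint s t) : gradedGF R w (s ∪ t) = gradedGF R w s + gradedGF R w t := by
  ext n
  have hfib : {x ∈ s ∪ t | w x = n} = {x ∈ s | w x = n} ∪ {x ∈ t | w x = n} := by
    ext x; simp [or_and_right]
  rw [map_add, coeff_gradedGF, coeff_gradedGF, coeff_gradedGF, hfib,
    Set.ncard_union_eq (hst.mono (fun x hx => hx.1) (fun x hx => hx.1))
      ((hw n).subset fun x hx => hx.2) ((hw n).subset fun x hx => hx.2), Nat.cast_add]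

lemma gradedGF_prod {w₁ : α → ℕ} {w₂ : β → ℕ} (hw₁ : ∀ n, {a | w₁ a = n}.Finite)
    (hw₂ : ∀ n, {b | w₂ b = n}.Finite) (s : Set α) (t : Set β) :
    gradedGF R (fun x => w₁ x.1 + w₂ x.2) (s ×ˢ t) = gradedGF R w₁ s * gradedGF R w₂ t := by
  ext n
  have hfib : {x ∈ s ×ˢ t | w₁ x.1 + w₂ x.2 = n} =
      ⋃ ij ∈ (Finset.HasAntidiagonal.antidiagonal n : Set (ℕ × ℕ)),
        {a ∈ s | w₁ a = ij.1} ×ˢ {b ∈ t | w₂ b = ij.2} := by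
    ext x; simp [and_assoc]
  have hdisj : (Finset.HasAntidiagonal.antidiagonal n : Set (ℕ × ℕ)).PairwiseDisjoint
      fun ij => {a ∈ s | w₁ a = ij.1} ×ˢ {b ∈ t | w₂ b = ij.2} := by
    intro ij _ kl _ hne
    refine Set.disjoint_left.mpr fun x hx hx' => hne ?_
    simp only [Set.mem_prod, Set.mem_ofPred_eq] at hx hx'
    exact Prod.ext (hx.1.2.symm.trans hx'.1.2) (hx.2.2.symm.trans hx'.2.2)
  rw [coeff_gradedGF, coeff_mul, hfib, (Finset.finite_toSet _).ncard_biUnion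
      (fun ij _ => ((hw₁ _).subset fun a ha => ha.2).prod ((hw₂ _).subset fun b hb => hb.2)) hdisj,
    finsum_mem_coe_finset, Nat.cast_sum]
  simp only [Set.ncard_prod, Nat.cast_mul, coeff_gradedGF]

end GradedGF

section Paths

lemma foldl_stepVal (a : ℤ) (l : List Bool) :
    l.foldl (fun h b => h + stepVal b) a = a + l.count true - l.count false := by
  induction l generalizing a with
  | nil => simp
  | cons b l ih =>
    rw [List.foldl_cons, ih]
    cases b <;> simp [stepVal] <;> ring

lemma mem_heights {l : List Bool} {h : ℤ} :
    h ∈ heights l ↔ ∃ i ≤ l.length, h = (l.take i).count true - (l.take i).count false := by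
  simp only [heights, List.mem_iff_getElem, List.getElem_scanl, List.length_scanl, foldl_stepVal,
    zero_add, Nat.lt_succ_iff]
  exact ⟨fun ⟨i, hi, hh⟩ => ⟨i, hi, hh.symm⟩, fun ⟨i, hi, hh⟩ => ⟨i, hi, hh.symm⟩⟩

/-- `valleyLevels` of a path started at height `a`, computed by recursion on the path. -/
def valleysFrom (a : ℤ) : List Bool → List ℤ
  | b :: c :: t =>
    (if b = false ∧ c = true then [a + stepVal b] else []) ++ valleysFrom (a + stepVal b) (c :: t)
  | _ => []

@[simp] lemma valleysFrom_nil (a : ℤ) : valleysFrom a [] = [] := rfl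

@[simp] lemma valleysFrom_singleton (a : ℤ) (b : Bool) : valleysFrom a [b] = [] := rfl

lemma valleysFrom_cons_cons (a : ℤ) (b c : Bool) (t : List Bool) :
    valleysFrom a (b :: c :: t) = (if b = false ∧ c = true then [a + stepVal b] else []) ++
      valleysFrom (a + stepVal b) (c :: t) :=
  rfl

lemma filterMap_eq_valleysFrom : ∀ (l : List Bool) (a : ℤ),
    ((l.zip l.tail).zip (l.scanl (fun h b => h + stepVal b) a).tail).filterMap
      (fun x => if x.1.1 = false ∧ x.1.2 = true then some x.2 else none) = valleysFrom a l
  | [], _ | [_], _ => rfl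
  | b :: c :: t, a => by
    rw [valleysFrom_cons_cons, ← filterMap_eq_valleysFrom (c :: t)]
    by_cases h : b = false ∧ c = true <;> simp [h]

lemma valleyLevels_eq_valleysFrom (l : List Bool) : valleyLevels l = valleysFrom 0 l :=
  filterMap_eq_valleysFrom l 0

lemma valleysFrom_add :
    ∀ (l : List Bool) (a c : ℤ), valleysFrom (a + c) l = (valleysFrom a l).map (· + c)
  | [], _, _ | [_], _, _ => rfl
  | b :: d :: t, a, c => by
    rw [valleysFrom_cons_cons, valleysFrom_cons_cons, add_right_comm, valleysFrom_add (d :: t)]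
    by_cases h : b = false ∧ d = true <;> simp [h, add_right_comm]

lemma valleysFrom_true_cons (a : ℤ) (l : List Bool) :
    valleysFrom a (true :: l) = valleysFrom (a + 1) l := by
  cases l with
  | nil => rfl
  | cons c t => simp [valleysFrom_cons_cons, stepVal]

lemma valleysFrom_false_cons_true_cons (a : ℤ) (l : List Bool) :
    valleysFrom a (false :: true :: l) = (a - 1) :: valleysFrom (a - 1) (true :: l) := by
  simp [valleysFrom_cons_cons, stepVal, sub_eq_add_neg]

lemma valleysFrom_append_false_cons : ∀ (l₁ : List Bool) (a : ℤ) (l₂ : List Bool),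
    valleysFrom a (l₁ ++ false :: l₂) =
      valleysFrom a l₁ ++ valleysFrom (l₁.foldl (fun h b => h + stepVal b) a) (false :: l₂)
  | [], _, _ => by simp
  | [b], a, l₂ => by cases b <;> simp [valleysFrom_cons_cons, stepVal]
  | b :: c :: t, a, l₂ => by
    rw [List.cons_append, List.cons_append, valleysFrom_cons_cons, ← List.cons_append,
      valleysFrom_append_false_cons (c :: t), valleysFrom_cons_cons]
    simp

end Paths

open DyckStep

def DyckStep.equivBool : DyckStep ≃ Bool where
  toFun s := s = U
  invFun b := if b then U else D
  left_inv s := by cases s <;> rfl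
  right_inv b := by cases b <;> rfl

namespace DyckWord

lemma semilength_eq_zero_iff {p : DyckWord} : p.semilength = 0 ↔ p = 0 := by
  refine ⟨fun h => ?_, fun h => h ▸ semilength_zero⟩
  have := p.two_mul_semilength_eq_length
  rw [← toList_eq_nil, ← List.length_eq_zero_iff]
  omega

lemma finite_setOf_semilength_eq (n : ℕ) : {p : DyckWord | p.semilength = n}.Finite :=
  Set.finite_coe_iff.mp (inferInstanceAs (Finite {p : DyckWord // p.semilength = n}))

lemma nest_add_injective : Function.Injective fun x : DyckWord × DyckWord => x.1.nest + x.2 := by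
  rintro ⟨q, r⟩ ⟨q', r'⟩ h
  have hin := congrArg insidePart h
  have hout := congrArg outsidePart h
  simp only [insidePart_add nest_ne_zero, outsidePart_add nest_ne_zero, insidePart_nest,
    outsidePart_nest, zero_add] at hin hout
  rw [hin, hout]

section FirstReturn

variable {R : Type*} [CommSemiring R]

/-- First-return decomposition `p = U q D r` at the level of generating functions. -/
lemma gradedGF_semilength_eq {s : Set DyckWord} (h0 : 0 ∈ s) :
    gradedGF R semilength s = 1 + X * gradedGF R (fun x : DyckWord × DyckWord =>
      x.1.semilength + x.2.semilength) ((fun x => x.1.nest + x.2) ⁻¹' s) := by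
  ext n
  rw [map_add, coeff_gradedGF, coeff_one]
  rcases n with _ | n
  · have hfib : {p ∈ s | p.semilength = 0} = {0} := by
      ext p
      simp only [semilength_eq_zero_iff, Set.mem_ofPred_eq, Set.mem_singleton_iff]
      exact ⟨And.right, fun hp => ⟨hp ▸ h0, hp⟩⟩
    simp [hfib]
  · have hfib : {p ∈ s | p.semilength = n + 1} = (fun x : DyckWord × DyckWord => x.1.nest + x.2) ''
        {x ∈ (fun x => x.1.nest + x.2) ⁻¹' s | x.1.semilength + x.2.semilength = n} := by
      ext p
      constructor
      · rintro ⟨hp, hn⟩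
        have hp0 : p ≠ 0 := by rintro rfl; simp at hn
        refine ⟨(p.insidePart, p.outsidePart), ⟨?_, ?_⟩, nest_insidePart_add_outsidePart hp0⟩
        · simpa [nest_insidePart_add_outsidePart hp0]
        · have := semilength_insidePart_add_semilength_outsidePart_add_one hp0
          simp only at this ⊢
          omega
      · rintro ⟨x, ⟨hx, hn⟩, rfl⟩
        exact ⟨hx, by simp only [semilength_add, semilength_nest]; omega⟩
    rw [hfib, Set.ncard_image_of_injective _ nest_add_injective, coeff_succ_X_mul,
      coeff_gradedGF, if_neg n.succ_ne_zero, zero_add]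

lemma gradedGF_prod_zero (s : Set DyckWord) :
    gradedGF R (fun x : DyckWord × DyckWord => x.1.semilength + x.2.semilength) (s ×ˢ {0}) =
      gradedGF R semilength s := by
  rw [gradedGF_prod finite_setOf_semilength_eq finite_setOf_semilength_eq, gradedGF_singleton,
    semilength_zero, pow_zero, mul_one]

lemma gradedGF_union_prod {s₁ t₁ s₂ t₂ : Set DyckWord} (ht : Disjoint t₁ t₂) :
    gradedGF R (fun x : DyckWord × DyckWord => x.1.semilength + x.2.semilength)
      (s₁ ×ˢ t₁ ∪ s₂ ×ˢ t₂) =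
      gradedGF R semilength s₁ * gradedGF R semilength t₁ +
        gradedGF R semilength s₂ * gradedGF R semilength t₂ := by
  rw [gradedGF_union (finite_setOf_add_eq finite_setOf_semilength_eq finite_setOf_semilength_eq)
      (Set.disjoint_prod.mpr (Or.inr ht)),
    gradedGF_prod finite_setOf_semilength_eq finite_setOf_semilength_eq,
    gradedGF_prod finite_setOf_semilength_eq finite_setOf_semilength_eq]

end FirstReturn

def toBools (p : DyckWord) : List Bool := p.toList.map DyckStep.equivBool

lemma count_true_map_equivBool (l : List DyckStep) :
    (l.map DyckStep.equivBool).count true = l.count U :=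
  List.count_map_of_injective _ _ DyckStep.equivBool.injective U

lemma count_false_map_equivBool (l : List DyckStep) :
    (l.map DyckStep.equivBool).count false = l.count D :=
  List.count_map_of_injective _ _ DyckStep.equivBool.injective D

lemma semilength_toBools (p : DyckWord) : _root_.semilength p.toBools = p.semilength :=
  count_true_map_equivBool _

lemma isDyck_toBools (p : DyckWord) : IsDyck p.toBools := by
  refine ⟨?_, fun h hh => ?_⟩
  · rw [toBools, count_true_map_equivBool, count_false_map_equivBool, p.count_U_eq_count_D]
  · obtain ⟨i, -, rfl⟩ := mem_heights.mp hh
    rw [toBools, ← List.map_take, count_true_map_equivBool, count_false_map_equivBool,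
      sub_nonneg, Nat.cast_le]
    exact p.count_D_le_count_U i

lemma toBools_injective : Function.Injective toBools := fun _ _ h =>
  DyckWord.ext (List.map_injective_iff.mpr DyckStep.equivBool.injective h)

lemma exists_toBools_eq {l : List Bool} (hl : IsDyck l) : ∃ p : DyckWord, p.toBools = l := by
  have hmap : (l.map DyckStep.equivBool.symm).map DyckStep.equivBool = l := by
    simp [List.map_map, Function.comp_def]
  refine ⟨⟨l.map DyckStep.equivBool.symm, ?_, fun i => ?_⟩, hmap⟩
  · rw [← count_true_map_equivBool, ← count_false_map_equivBool, hmap, hl.1]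
  · rw [← count_true_map_equivBool, ← count_false_map_equivBool, List.map_take, hmap]
    obtain ⟨j, hj, hj'⟩ : ∃ j ≤ l.length, l.take i = l.take j :=
      ⟨min i l.length, min_le_right _ _, by simp⟩
    have := hl.2 _ (mem_heights.mpr ⟨j, hj, rfl⟩)
    rw [hj']
    omega

lemma toBools_nest_add (q r : DyckWord) :
    (q.nest + r).toBools = true :: (q.toBools ++ false :: r.toBools) := by
  change ((U :: (q.toList ++ [D])) ++ r.toList).map DyckStep.equivBool = _
  simp [toBools, DyckStep.equivBool]

lemma exists_toBools_eq_true_cons {r : DyckWord} (hr : r ≠ 0) : ∃ t, r.toBools = true :: t := by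
  obtain ⟨s, t, hst⟩ := List.exists_cons_of_ne_nil (toList_ne_nil.mpr hr)
  have hs : s = U := by simpa [hst] using r.head_eq_U (toList_ne_nil.mpr hr)
  exact ⟨t.map DyckStep.equivBool, by simp [toBools, hst, hs, DyckStep.equivBool]⟩

def valleys (p : DyckWord) : List ℤ := valleyLevels p.toBools

@[simp] lemma valleys_zero : valleys 0 = [] := rfl

lemma valleys_nest_add (q r : DyckWord) :
    (q.nest + r).valleys = q.valleys.map (· + 1) ++ if r = 0 then [] else 0 :: r.valleys := by
  have hq := (isDyck_toBools q).1
  simp only [valleys, valleyLevels_eq_valleysFrom, toBools_nest_add, valleysFrom_true_cons,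
    valleysFrom_append_false_cons, ← valleysFrom_add, foldl_stepVal, hq, add_sub_cancel_right,
    zero_add]
  split_ifs with hr
  · subst hr
    rfl
  · obtain ⟨t, ht⟩ := exists_toBools_eq_true_cons hr
    simp [ht, valleysFrom_false_cons_true_cons]

lemma valleys_nest (q : DyckWord) : q.nest.valleys = q.valleys.map (· + 1) := by
  simpa using valleys_nest_add q 0

lemma nonneg_of_mem_valleys {p : DyckWord} {v : ℤ} (hv : v ∈ p.valleys) : 0 ≤ v := by
  obtain ⟨x, hx, hxv⟩ := List.mem_filterMap.mp hv
  have hv : x.2 = v := by split_ifs at hxv; simp_all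
  exact hv ▸ (isDyck_toBools p).2 _ (List.mem_of_mem_tail (List.of_mem_zip hx).2)

def Restricted (p : DyckWord) : Prop := RestrictedD (-1) p.toBools

/-- As valleys are nonnegative, this says that the last valley of `p`, if any, is on the axis:
exactly what `q` needs for `U q D r` with `r ≠ 0` to keep the `(-1)` condition at the valley
where it returns to the axis. -/
def LastValleyNonpos (p : DyckWord) : Prop := ∀ v ∈ p.valleys.getLast?, v ≤ 0

lemma restricted_iff {p : DyckWord} : p.Restricted ↔ p.valleys.IsChain (fun a b => -1 ≤ b - a) :=
  Iff.rfl

lemma restricted_nest {q : DyckWord} : q.nest.Restricted ↔ q.Restricted := by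
  simp [restricted_iff, valleys_nest, List.isChain_map]

lemma restricted_nest_add {q r : DyckWord} (hr : r ≠ 0) :
    (q.nest + r).Restricted ↔ (q.Restricted ∧ q.LastValleyNonpos) ∧ r.Restricted := by
  have hshift : (fun a b : ℤ => -1 ≤ b + 1 - (a + 1)) = fun a b => -1 ≤ b - a := by
    simp only [add_sub_add_right_eq_sub]
  have hhead : ∀ y ∈ r.valleys.head?, (-1 : ℤ) ≤ y - 0 := fun y hy => by
    linarith [nonneg_of_mem_valleys (List.mem_of_mem_head? hy)]
  simp only [restricted_iff, valleys_nest_add, if_neg hr, List.isChain_append, List.isChain_map,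
    List.isChain_cons, hshift, List.getLast?_map, Option.forall_mem_map, List.head?_cons,
    Option.mem_some_iff, forall_eq', LastValleyNonpos]
  refine ⟨fun ⟨hq, ⟨_, hr⟩, hlast⟩ => ⟨⟨hq, fun v hv => ?_⟩, hr⟩,
    fun ⟨⟨hq, hlast⟩, hr⟩ => ⟨hq, ⟨hhead, hr⟩, fun v hv => ?_⟩⟩
  · linarith [hlast v hv]
  · linarith [hlast v hv]

lemma lastValleyNonpos_nest {q : DyckWord} : q.nest.LastValleyNonpos ↔ q.valleys = [] := by
  rw [LastValleyNonpos, valleys_nest, List.getLast?_map, Option.forall_mem_map]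
  rcases List.eq_nil_or_concat' q.valleys with h | ⟨L, u, h⟩
  · simp [h]
  · have hu : 0 ≤ u := nonneg_of_mem_valleys (p := q) (by simp [h])
    simp only [h, List.getLast?_concat, Option.mem_some_iff, forall_eq', List.append_eq_nil_iff,
      List.cons_ne_nil, and_false, iff_false, not_le]
    omega

lemma lastValleyNonpos_nest_add {q r : DyckWord} (hr : r ≠ 0) :
    (q.nest + r).LastValleyNonpos ↔ r.LastValleyNonpos := by
  rw [LastValleyNonpos, LastValleyNonpos, valleys_nest_add, if_neg hr, List.getLast?_append_cons,
    List.getLast?_cons]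
  cases r.valleys.getLast? <;> simp

lemma preimage_nest_add_restricted :
    (fun x : DyckWord × DyckWord => x.1.nest + x.2) ⁻¹' {p | p.Restricted} =
      {q | q.Restricted} ×ˢ {0} ∪
        {q | q.Restricted ∧ q.LastValleyNonpos} ×ˢ ({r | r.Restricted} \ {0}) := by
  ext ⟨q, r⟩
  rcases eq_or_ne r 0 with rfl | hr
  · simp [restricted_nest]
  · simp [restricted_nest_add hr, hr]

lemma preimage_nest_add_restricted_lastValleyNonpos :
    (fun x : DyckWord × DyckWord => x.1.nest + x.2) ⁻¹' {p | p.Restricted ∧ p.LastValleyNonpos} =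
      {q | q.valleys = []} ×ˢ {0} ∪ {q | q.Restricted ∧ q.LastValleyNonpos} ×ˢ
        ({r | r.Restricted ∧ r.LastValleyNonpos} \ {0}) := by
  ext ⟨q, r⟩
  rcases eq_or_ne r 0 with rfl | hr
  · simp +contextual [lastValleyNonpos_nest, restricted_iff, valleys_nest]
  · simp [restricted_nest_add hr, lastValleyNonpos_nest_add hr, hr, and_assoc]

lemma preimage_nest_add_valleys_eq_nil :
    (fun x : DyckWord × DyckWord => x.1.nest + x.2) ⁻¹' {p | p.valleys = []} =
      {q | q.valleys = []} ×ˢ {0} := by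
  ext ⟨q, r⟩
  rcases eq_or_ne r 0 with rfl | hr <;> simp [valleys_nest_add, *]

section GeneratingFunctions

variable (R : Type*) [CommRing R]

noncomputable def restrictedGF : R⟦X⟧ := gradedGF R semilength {p : DyckWord | p.Restricted}

noncomputable def restrictedLastValleyNonposGF : R⟦X⟧ :=
  gradedGF R semilength {p : DyckWord | p.Restricted ∧ p.LastValleyNonpos}

noncomputable def valleyFreeGF : R⟦X⟧ := gradedGF R semilength {p : DyckWord | p.valleys = []}

variable {R}

lemma gradedGF_diff_zero {s : Set DyckWord} (h0 : 0 ∈ s) :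
    gradedGF R semilength (s \ {0}) = gradedGF R semilength s - 1 := by
  have := gradedGF_insert (R := R) finite_setOf_semilength_eq (a := 0) (s := s \ {0}) (by simp)
  rw [Set.insert_sdiff_singleton, Set.insert_eq_of_mem h0, semilength_zero, pow_zero] at this
  rw [this, add_sub_cancel_left]

lemma restrictedGF_eq : restrictedGF R =
    1 + X * (restrictedGF R + restrictedLastValleyNonposGF R * (restrictedGF R - 1)) := by
  have h0 : (0 : DyckWord).Restricted := List.isChain_nil
  refine (gradedGF_semilength_eq h0).trans ?_
  rw [preimage_nest_add_restricted,
    gradedGF_union_prod Set.disjoint_sdiff_right, gradedGF_singleton, semilength_zero, pow_zero,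
    mul_one, gradedGF_diff_zero h0]
  rfl

lemma restrictedLastValleyNonposGF_eq : restrictedLastValleyNonposGF R = 1 + X *
    (valleyFreeGF R + restrictedLastValleyNonposGF R * (restrictedLastValleyNonposGF R - 1)) := by
  have h0 : (0 : DyckWord).Restricted ∧ (0 : DyckWord).LastValleyNonpos :=
    ⟨List.isChain_nil, by simp [LastValleyNonpos]⟩
  refine (gradedGF_semilength_eq h0).trans ?_
  rw [preimage_nest_add_restricted_lastValleyNonpos, gradedGF_union_prod Set.disjoint_sdiff_right,
    gradedGF_singleton, semilength_zero, pow_zero, mul_one, gradedGF_diff_zero h0]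
  rfl

lemma valleyFreeGF_eq : valleyFreeGF R = 1 + X * valleyFreeGF R := by
  refine (gradedGF_semilength_eq valleys_zero).trans ?_
  rw [preimage_nest_add_valleys_eq_nil, gradedGF_prod_zero, valleyFreeGF]

lemma coeff_restrictedGF (n : ℕ) : coeff n (restrictedGF R) = dDyckCount (-1) n := by
  have hset : {l : List Bool | IsDyck l ∧ _root_.semilength l = n ∧ RestrictedD (-1) l} =
      toBools '' {p ∈ {p : DyckWord | p.Restricted} | p.semilength = n} := by
    ext l
    constructor
    · rintro ⟨hl, hn, hr⟩
      obtain ⟨p, rfl⟩ := exists_toBools_eq hl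
      exact ⟨p, ⟨hr, semilength_toBools p ▸ hn⟩, rfl⟩
    · rintro ⟨p, ⟨hr, hn⟩, rfl⟩
      exact ⟨isDyck_toBools p, (semilength_toBools p).trans hn, hr⟩
  rw [restrictedGF, coeff_gradedGF, dDyckCount, hset,
    Set.ncard_image_of_injective _ toBools_injective]

end GeneratingFunctions

end DyckWord

open DyckWord in
lemma Lgf_eq_restrictedGF_sub_one : Lgf = restrictedGF ℚ - 1 := by
  ext n
  rw [Lgf, coeff_mk, map_sub]
  rcases n with _ | n
  · rw [restrictedGF_eq]
    simp
  · rw [coeff_restrictedGF, coeff_one, if_neg n.succ_ne_zero, if_neg n.succ_ne_zero, sub_zero]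

open DyckWord in
/-- `L(x) = (-1 + 4x - 3x² + √(1-4x+2x²+x⁴)) / (2(1-4x+2x²))`, stated as the
squared (algebraic) identity in `ℚ[[x]]`. -/
theorem Lgf_algebraic_equation :
    (2 * (1 - 4 * X + 2 * X ^ 2) * Lgf + 1 - 4 * X + 3 * (X : PowerSeries ℚ) ^ 2) ^ 2 =
      1 - 4 * X + 2 * X ^ 2 + X ^ 4 := by
  have hF := restrictedGF_eq (R := ℚ)
  have hB := restrictedLastValleyNonposGF_eq (R := ℚ)
  have hV := valleyFreeGF_eq (R := ℚ)
  rw [Lgf_eq_restrictedGF_sub_one]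
  set F := restrictedGF ℚ
  set B := restrictedLastValleyNonposGF ℚ
  -- `B` is eliminated through `K = 1 - X - X B`: `hF` says `(F - 1) K = X`, and `hB`, `hV` give a
  -- quadratic relation between `X` and `K`.
  have hK0 : 1 - X - X * B ≠ 0 := fun h => by simpa using congrArg constantCoeff h
  have hFK : (F - 1) * (1 - X - X * B) = X := by linear_combination hF
  have hBK : (1 - 4 * X + 2 * X ^ 2) * X + (1 - 4 * X + 3 * X ^ 2) * (1 - X - X * B) =
      (1 - X) * (1 - X - X * B) ^ 2 := by
    linear_combination X * (1 - X) * hB + X ^ 2 * hV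
  generalize 1 - X - X * B = K at hK0 hFK hBK
  refine mul_right_cancel₀ (pow_ne_zero 2 hK0) ?_
  calc (2 * (1 - 4 * X + 2 * X ^ 2) * (F - 1) + 1 - 4 * X + 3 * X ^ 2) ^ 2 * K ^ 2
      = (2 * (1 - 4 * X + 2 * X ^ 2) * ((F - 1) * K) + (1 - 4 * X + 3 * X ^ 2) * K) ^ 2 := by ring
    _ = (2 * (1 - 4 * X + 2 * X ^ 2) * X + (1 - 4 * X + 3 * X ^ 2) * K) ^ 2 := by rw [hFK]
    _ = (1 - 4 * X + 2 * X ^ 2 + X ^ 4) * K ^ 2 := by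
      linear_combination 4 * (1 - 4 * X + 2 * X ^ 2) * X * hBK
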